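/- arXiv:2310.01844 — 4 statements merged into one kernel-verified Lean document; each statement's English description precedes it below -/
import Mathlib

section
/- Let f : M_n(ℝ) → M_n(ℝ) satisfy the continuous-time group-affine condition f(A·B) = f(A)·B + A·f(B) − A·f(I)·B for all n×n real matrices A, B. Let χ, χ̂ : ℝ → M_n(ℝ) be differentiable matrix-valued curves such that χ(t) is invertible for every t, χ'(t) = f(χ(t)), and χ̂'(t) = f(χ̂(t)). Then the right-invariant error η(t) = χ̂(t)·χ(t)⁻¹ satisfies the autonomous (state-trajectory-independent) differential equation η'(t) = f(η(t)) − η(t)·f(I). -/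
/-!
Group-affinity gives `f (a b⁻¹) = f a · b⁻¹ - a b⁻¹ · f b · b⁻¹ + a b⁻¹ · f 1`. Differentiating
`η = χ̂ χ⁻¹` by the product rule and `(χ⁻¹)' = -χ⁻¹ χ' χ⁻¹` gives
`η' = f χ̂ · χ⁻¹ - η · f χ · χ⁻¹`, which by that identity with `a = χ̂`, `b = χ` is `f η - η · f 1`.
-/

open scoped Ring

section GroupAffine

variable {R : Type*} [Ring R]

def IsGroupAffine (f : R → R) : Prop :=
  ∀ a b, f (a * b) = f a * b + a * f b - a * f 1 * b

theorem IsGroupAffine.map_mul_inverse {f : R → R} (hf : IsGroupAffine f) (a : R) {b : R}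
    (hb : IsUnit b) :
    f (a * b⁻¹ʳ) = f a * b⁻¹ʳ - a * b⁻¹ʳ * f b * b⁻¹ʳ + a * b⁻¹ʳ * f 1 := by
  obtain ⟨u, rfl⟩ := hb
  have h := hf (a * ↑u⁻¹) u
  rw [Units.inv_mul_cancel_right] at h
  rw [Ring.inverse_unit, h]
  simp only [sub_mul, add_mul, mul_assoc, Units.mul_inv, mul_one]
  abel

end GroupAffine

section Calculus

variable {𝕜 : Type*} [NontriviallyNormedField 𝕜]
  {R : Type*} [NormedRing R] [HasSummableGeomSeries R] [NormedAlgebra 𝕜 R]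

theorem HasDerivAt.ringInverse {c : 𝕜 → R} {c' : R} {x : 𝕜} (hc : HasDerivAt c c' x)
    (hx : IsUnit (c x)) :
    HasDerivAt (fun y => (c y)⁻¹ʳ) (-((c x)⁻¹ʳ * c' * (c x)⁻¹ʳ)) x := by
  obtain ⟨u, hu⟩ := hx
  have hinv : HasFDerivAt Ring.inverse (-ContinuousLinearMap.mulLeftRight 𝕜 R ↑u⁻¹ ↑u⁻¹) (c x) :=
    hu ▸ hasFDerivAt_ringInverse u
  simpa [← hu, Function.comp_def] using hinv.comp_hasDerivAt x hc

theorem IsGroupAffine.hasDerivAt_mul_inverse {f : R → R} (hf : IsGroupAffine f)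
    {χ χhat : 𝕜 → R} {t : 𝕜} (hunit : IsUnit (χ t))
    (hχ : HasDerivAt χ (f (χ t)) t) (hχhat : HasDerivAt χhat (f (χhat t)) t) :
    HasDerivAt (fun s => χhat s * (χ s)⁻¹ʳ)
      (f (χhat t * (χ t)⁻¹ʳ) - χhat t * (χ t)⁻¹ʳ * f 1) t := by
  refine (hχhat.mul (hχ.ringInverse hunit)).congr_deriv ?_
  rw [hf.map_mul_inverse _ hunit]
  noncomm_ring

end Calculus

/-- For a continuous-time group-affine dynamics `f`, the right-invariant error
`η = χ̂ · χ⁻¹` of two solutions satisfies the autonomous equation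
`η' = f(η) − η · f(I)`. -/
theorem right_invariant_error_autonomous (n : ℕ)
    (f : Matrix (Fin n) (Fin n) ℝ → Matrix (Fin n) (Fin n) ℝ)
    (hf : ∀ A B : Matrix (Fin n) (Fin n) ℝ, f (A * B) = f A * B + A * f B - A * f 1 * B)
    (χ χhat : ℝ → Matrix (Fin n) (Fin n) ℝ)
    (hinv : ∀ t, IsUnit (χ t))
    (hχ : ∀ t, HasDerivAt χ (f (χ t)) t)
    (hχhat : ∀ t, HasDerivAt χhat (f (χhat t)) t) (t : ℝ) :
    HasDerivAt (fun s => χhat s * (χ s)⁻¹)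
      (f (χhat t * (χ t)⁻¹) - χhat t * (χ t)⁻¹ * f 1) t := by
  simp only [Matrix.nonsing_inv_eq_ringInverse]
  -- `HasDerivAt` only depends on the topology, so any submultiplicative matrix norm will do.
  let _ : NormedRing (Matrix (Fin n) (Fin n) ℝ) := Matrix.linftyOpNormedRing
  let _ : NormedAlgebra ℝ (Matrix (Fin n) (Fin n) ℝ) := Matrix.linftyOpNormedAlgebra
  exact IsGroupAffine.hasDerivAt_mul_inverse hf (hinv t) (hχ t) (hχhat t)
end

section
/- Let f : M_n(ℝ) → M_n(ℝ) satisfy the continuous-time group-affine condition f(A·B) = f(A)·B + A·f(B) − A·f(I)·B for all n×n real matrices A, B. Let χ, χ̂ : ℝ → M_n(ℝ) be differentiable matrix-valued curves such that χ(t) is invertible for every t, χ'(t) = f(χ(t)), and χ̂'(t) = f(χ̂(t)). Then the left-invariant error η(t) = χ(t)⁻¹·χ̂(t) satisfies the autonomous (state-trajectory-independent) differential equation η'(t) = f(η(t)) − f(I)·η(t). -/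
attribute [local instance] Matrix.normedAddCommGroup Matrix.normedSpace


open Matrix

section helpers
variable {n : ℕ}

/-- entry extraction -/
theorem entry_hasDerivAt {χ : ℝ → Matrix (Fin n) (Fin n) ℝ} {A : Matrix (Fin n) (Fin n) ℝ}
    {t : ℝ} (h : HasDerivAt χ A t) (i j : Fin n) :
    HasDerivAt (fun s => χ s i j) (A i j) t :=
  hasDerivAt_pi.1 (hasDerivAt_pi.1 h i) j

/-- product rule for matrix curves (entrywise) -/
theorem matrix_mul_hasDerivAt {A B : ℝ → Matrix (Fin n) (Fin n) ℝ}
    {A' B' : Matrix (Fin n) (Fin n) ℝ} {t : ℝ}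
    (hA : HasDerivAt A A' t) (hB : HasDerivAt B B' t) :
    HasDerivAt (fun s => A s * B s) (A' * B t + A t * B') t := by
  refine hasDerivAt_pi.2 fun i => hasDerivAt_pi.2 fun j => ?_
  have : ∀ s, (A s * B s) i j = ∑ k, A s i k * B s k j := fun s => Matrix.mul_apply ..
  simp only [this]
  have h : HasDerivAt (fun s => ∑ k, A s i k * B s k j)
      (∑ k, (A' i k * B t k j + A t i k * B' k j)) t :=
    HasDerivAt.fun_sum fun k _ => (entry_hasDerivAt hA i k).mul (entry_hasDerivAt hB k j)
  refine h.congr_deriv ?_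
  simp [Matrix.add_apply, Matrix.mul_apply, Finset.sum_add_distrib]

/-- determinant is differentiable entrywise -/
theorem det_differentiableAt {M : ℝ → Matrix (Fin n) (Fin n) ℝ} {t : ℝ}
    (hM : ∀ i j, DifferentiableAt ℝ (fun s => M s i j) t) :
    DifferentiableAt ℝ (fun s => (M s).det) t := by
  simp only [Matrix.det_apply']
  exact DifferentiableAt.fun_sum fun σ _ =>
    (DifferentiableAt.fun_finsetProd fun i _ => hM (σ i) i).const_mul _

theorem inv_differentiableAt {χ : ℝ → Matrix (Fin n) (Fin n) ℝ} {t : ℝ}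
    (hχ : ∀ i j, DifferentiableAt ℝ (fun s => χ s i j) t)
    (hdet : (χ t).det ≠ 0) :
    DifferentiableAt ℝ (fun s => (χ s)⁻¹) t := by
  have key : ∀ s, (χ s)⁻¹ = (Ring.inverse (χ s).det) • (χ s).adjugate := fun s =>
    Matrix.inv_def (χ s)
  have key' : ∀ s i j, (χ s)⁻¹ i j = ((χ s).det)⁻¹ * (χ s).adjugate i j := by
    intro s i j
    rw [key s, Matrix.smul_apply, Ring.inverse_eq_inv', smul_eq_mul]
  refine differentiableAt_pi.2 ?_
  intro i
  rw [differentiableAt_pi]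
  intro j
  have : (fun s => (χ s)⁻¹ i j) = fun s => ((χ s).det)⁻¹ * (χ s).adjugate i j := by
    funext s; exact key' s i j
  rw [this]
  have hd : DifferentiableAt ℝ (fun s => (χ s).det) t := det_differentiableAt hχ
  have hadj : DifferentiableAt ℝ (fun s => (χ s).adjugate i j) t := by
    have : ∀ s, (χ s).adjugate i j = ((χ s).updateRow j (Pi.single i 1)).det := fun s =>
      Matrix.adjugate_apply ..
    simp only [this]
    refine det_differentiableAt fun k l => ?_
    simp only [Matrix.updateRow_apply]
    by_cases hkj : k = j
    · simp [hkj]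
    · simp only [hkj, if_false]; exact hχ k l
  exact (hd.inv hdet).mul hadj
end helpers

/-- For a continuous-time group-affine dynamics `f`, the left-invariant error
`η = χ⁻¹ · χ̂` of two solutions satisfies the autonomous equation
`η' = f(η) − f(I) · η`. -/
theorem left_invariant_error_autonomous (n : ℕ)
    (f : Matrix (Fin n) (Fin n) ℝ → Matrix (Fin n) (Fin n) ℝ)
    (hf : ∀ A B : Matrix (Fin n) (Fin n) ℝ, f (A * B) = f A * B + A * f B - A * f 1 * B)
    (χ χhat : ℝ → Matrix (Fin n) (Fin n) ℝ)
    (hinv : ∀ t, IsUnit (χ t))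
    (hχ : ∀ t, HasDerivAt χ (f (χ t)) t)
    (hχhat : ∀ t, HasDerivAt χhat (f (χhat t)) t) (t : ℝ) :
    HasDerivAt (fun s => (χ s)⁻¹ * χhat s)
      (f ((χ t)⁻¹ * χhat t) - f 1 * ((χ t)⁻¹ * χhat t)) t := by
  have hdet : ∀ s, IsUnit ((χ s).det) := fun s => (Matrix.isUnit_iff_isUnit_det _).1 (hinv s)
  have hdet0 : ((χ t).det) ≠ 0 := (hdet t).ne_zero
  -- differentiability of the inverse curve
  have hdiff : DifferentiableAt ℝ (fun s => (χ s)⁻¹) t :=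
    inv_differentiableAt (fun i j => (entry_hasDerivAt (hχ t) i j).differentiableAt) hdet0
  obtain ⟨g', hg'⟩ : ∃ g', HasDerivAt (fun s => (χ s)⁻¹) g' t := ⟨_, hdiff.hasDerivAt⟩
  set g : Matrix (Fin n) (Fin n) ℝ := (χ t)⁻¹ with hg
  have hgl : g * χ t = 1 := Matrix.nonsing_inv_mul _ (hdet t)
  have hgr : χ t * g = 1 := Matrix.mul_nonsing_inv _ (hdet t)
  -- χ * χ⁻¹ = 1, differentiate to compute g'
  have hone : HasDerivAt (fun s => χ s * (χ s)⁻¹) (f (χ t) * g + χ t * g') t :=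
    matrix_mul_hasDerivAt (hχ t) hg'
  have hconst : (fun s => χ s * (χ s)⁻¹) = fun _ => (1 : Matrix (Fin n) (Fin n) ℝ) := by
    funext s; exact Matrix.mul_nonsing_inv _ (hdet s)
  have hzero : f (χ t) * g + χ t * g' = 0 := by
    have := (hconst ▸ hone).unique (hasDerivAt_const t _)
    simpa using this
  have hg'eq : g' = -(g * f (χ t) * g) := by
    have h1 : χ t * g' = -(f (χ t) * g) := by
      have := hzero; linear_combination (norm := noncomm_ring) this
    calc g' = (g * χ t) * g' := by rw [hgl, one_mul]
    _ = g * (χ t * g') := by rw [mul_assoc]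
    _ = -(g * f (χ t) * g) := by rw [h1]; noncomm_ring
  -- product rule for η = g * χhat
  have hη : HasDerivAt (fun s => (χ s)⁻¹ * χhat s) (g' * χhat t + g * f (χhat t)) t :=
    matrix_mul_hasDerivAt hg' (hχhat t)
  convert hη using 1
  -- algebra
  have key := hf (χ t) (g * χhat t)
  have h2 : χ t * (g * χhat t) = χhat t := by rw [← mul_assoc, hgr, one_mul]
  rw [h2] at key
  have h3 : g * f (χhat t) = g * f (χ t) * g * χhat t + f (g * χhat t) - f 1 * (g * χhat t) := by
    rw [key]; simp only [mul_sub, mul_add, ← mul_assoc, hgl, one_mul]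
  rw [hg'eq, h3]; noncomm_ring
end

section
/- Exact dynamics of the right-invariant velocity error: let R, R̂ : ℝ → M₃(ℝ) be differentiable with R' = R·A and R̂' = R̂·Â, where Â(t) is skew-symmetric and R̂(t)ᵀR̂(t) = I for all t, and let v, v̂ : ℝ → ℝ³ be differentiable with v'(t) = R(t)·a(t) + g and v̂'(t) = R̂(t)·â(t) + g for a constant gravity vector g ∈ ℝ³ and specific-force curves a, â : ℝ → ℝ³. Then the right-invariant velocity error δv(t) = v(t) − R(t)·R̂(t)ᵀ·v̂(t) satisfies δv'(t) = R(t)·(a(t) − â(t)) + (I − R(t)·R̂(t)ᵀ)·g − R(t)·(A(t) − Â(t))·R̂(t)ᵀ·v̂(t). -/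
open Matrix

attribute [local instance] Matrix.normedAddCommGroup Matrix.normedSpace

section Aux

variable {n : Type*} [Fintype n] [DecidableEq n]

private lemma hasDerivAt_matrix {M : ℝ → Matrix n n ℝ} {D : Matrix n n ℝ} {t : ℝ} :
    HasDerivAt M D t ↔ ∀ i j, HasDerivAt (fun s => M s i j) (D i j) t := by
  refine (hasDerivAt_pi (φ := M) (φ' := D)).trans ?_
  exact forall_congr' fun i => hasDerivAt_pi

private lemma HasDerivAt.matrix_mul {M N : ℝ → Matrix n n ℝ} {DM DN : Matrix n n ℝ} {t : ℝ}
    (hM : HasDerivAt M DM t) (hN : HasDerivAt N DN t) :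
    HasDerivAt (fun s => M s * N s) (DM * N t + M t * DN) t := by
  rw [hasDerivAt_matrix] at *
  intro i j
  have h : HasDerivAt (fun s => ∑ k, M s i k * N s k j)
      (∑ k, (DM i k * N t k j + M t i k * DN k j)) t :=
    HasDerivAt.fun_sum fun k _ => (hM i k).mul (hN k j)
  simp only [Matrix.mul_apply, Matrix.add_apply]
  rw [← Finset.sum_add_distrib]
  exact h

private lemma HasDerivAt.matrix_transpose {M : ℝ → Matrix n n ℝ} {D : Matrix n n ℝ} {t : ℝ}
    (hM : HasDerivAt M D t) :
    HasDerivAt (fun s => (M s)ᵀ) Dᵀ t := by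
  rw [hasDerivAt_matrix] at *
  intro i j
  exact hM j i

private lemma HasDerivAt.matrix_mulVec {M : ℝ → Matrix n n ℝ} {DM : Matrix n n ℝ}
    {w : ℝ → n → ℝ} {Dw : n → ℝ} {t : ℝ}
    (hM : HasDerivAt M DM t) (hw : HasDerivAt w Dw t) :
    HasDerivAt (fun s => M s *ᵥ w s) (DM *ᵥ w t + M t *ᵥ Dw) t := by
  rw [hasDerivAt_matrix] at hM
  rw [hasDerivAt_pi] at hw ⊢
  intro i
  have h : HasDerivAt (fun s => ∑ k, M s i k * w s k)
      (∑ k, (DM i k * w t k + M t i k * Dw k)) t :=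
    HasDerivAt.fun_sum fun k _ => (hM i k).mul (hw k)
  simp only [Matrix.mulVec, dotProduct, Pi.add_apply]
  rw [← Finset.sum_add_distrib]
  exact h

end Aux

/-- Exact dynamics of the right-invariant velocity error `δv = v − R·R̂ᵀ·v̂`:
`δv' = R·(a − â) + (I − R·R̂ᵀ)·g − R·(A − Â)·R̂ᵀ·v̂`. -/
theorem right_invariant_velocity_error_dynamics
    (R Rhat A Ahat : ℝ → Matrix (Fin 3) (Fin 3) ℝ)
    (v vhat a ahat : ℝ → Fin 3 → ℝ) (g : Fin 3 → ℝ)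
    (hskew : ∀ t, (Ahat t)ᵀ = -Ahat t)
    (horth : ∀ t, (Rhat t)ᵀ * Rhat t = 1)
    (hR : ∀ t, HasDerivAt R (R t * A t) t)
    (hRhat : ∀ t, HasDerivAt Rhat (Rhat t * Ahat t) t)
    (hv : ∀ t, HasDerivAt v (R t *ᵥ a t + g) t)
    (hvhat : ∀ t, HasDerivAt vhat (Rhat t *ᵥ ahat t + g) t) (t : ℝ) :
    HasDerivAt (fun s => v s - (R s * (Rhat s)ᵀ) *ᵥ vhat s)
      (R t *ᵥ (a t - ahat t) + (1 - R t * (Rhat t)ᵀ) *ᵥ g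
        - (R t * (A t - Ahat t) * (Rhat t)ᵀ) *ᵥ vhat t) t := by
  have hRT : HasDerivAt (fun s => (Rhat s)ᵀ) (-Ahat t * (Rhat t)ᵀ) t := by
    have := HasDerivAt.matrix_transpose (hRhat t)
    rwa [Matrix.transpose_mul, hskew] at this
  have hP : HasDerivAt (fun s => R s * (Rhat s)ᵀ)
      ((fun s => R s * A s) t * (Rhat t)ᵀ + R t * ((fun s => -Ahat s * (Rhat s)ᵀ) t)) t :=
    HasDerivAt.matrix_mul (hR t) hRT
  have hQ : HasDerivAt (fun s => (R s * (Rhat s)ᵀ) *ᵥ vhat s)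
      ((fun s => R s * A s * (Rhat s)ᵀ + R s * (-Ahat s * (Rhat s)ᵀ)) t *ᵥ vhat t
        + (R t * (Rhat t)ᵀ) *ᵥ ((fun s => Rhat s *ᵥ ahat s + g) t)) t :=
    HasDerivAt.matrix_mulVec hP (hvhat t)
  have := (hv t).sub hQ
  refine this.congr_deriv ?_
  have key : (R t * (Rhat t)ᵀ) *ᵥ (Rhat t *ᵥ ahat t) = R t *ᵥ ahat t := by
    rw [Matrix.mulVec_mulVec, Matrix.mul_assoc, horth, Matrix.mul_one]
  simp only [Matrix.mulVec_add, Matrix.add_mulVec, Matrix.sub_mulVec, Matrix.mulVec_sub,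
    Matrix.mul_sub, Matrix.sub_mul, Matrix.one_mulVec, Matrix.neg_mul, Matrix.mul_neg,
    Matrix.neg_mulVec, key, Matrix.mul_assoc]
  abel
end

section
/- Exact dynamics of the right-invariant position error: let R, R̂ : ℝ → M₃(ℝ) be differentiable with R' = R·A and R̂' = R̂·Â, where Â(t) is skew-symmetric for all t, and let p, p̂, v, v̂ : ℝ → ℝ³ be differentiable with p'(t) = v(t) and p̂'(t) = v̂(t). Then the right-invariant position error δp(t) = p(t) − R(t)·R̂(t)ᵀ·p̂(t) satisfies δp'(t) = (v(t) − R(t)·R̂(t)ᵀ·v̂(t)) − R(t)·(A(t) − Â(t))·R̂(t)ᵀ·p̂(t). -/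
open Matrix

attribute [local instance] Matrix.normedAddCommGroup Matrix.normedSpace

/-- Exact dynamics of the right-invariant position error `δp = p − R·R̂ᵀ·p̂`:
`δp' = (v − R·R̂ᵀ·v̂) − R·(A − Â)·R̂ᵀ·p̂`. -/
theorem right_invariant_position_error_dynamics
    (R Rhat A Ahat : ℝ → Matrix (Fin 3) (Fin 3) ℝ)
    (p phat v vhat : ℝ → Fin 3 → ℝ)
    (hskew : ∀ t, (Ahat t)ᵀ = -Ahat t)
    (hR : ∀ t, HasDerivAt R (R t * A t) t)
    (hRhat : ∀ t, HasDerivAt Rhat (Rhat t * Ahat t) t)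
    (hp : ∀ t, HasDerivAt p (v t) t)
    (hphat : ∀ t, HasDerivAt phat (vhat t) t) (t : ℝ) :
    HasDerivAt (fun s => p s - (R s * (Rhat s)ᵀ) *ᵥ phat s)
      ((v t - (R t * (Rhat t)ᵀ) *ᵥ vhat t)
        - (R t * (A t - Ahat t) * (Rhat t)ᵀ) *ᵥ phat t) t := by
  have hRe : ∀ i k, HasDerivAt (fun s => R s i k) ((R t * A t) i k) t := fun i k =>
    hasDerivAt_pi.mp (hasDerivAt_pi.mp (hR t) i) k
  have hRhate : ∀ j k, HasDerivAt (fun s => Rhat s j k) ((Rhat t * Ahat t) j k) t := fun j k =>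
    hasDerivAt_pi.mp (hasDerivAt_pi.mp (hRhat t) j) k
  have hpe : ∀ i, HasDerivAt (fun s => p s i) (v t i) t := fun i =>
    hasDerivAt_pi.mp (hp t) i
  have hphate : ∀ j, HasDerivAt (fun s => phat s j) (vhat t j) t := fun j =>
    hasDerivAt_pi.mp (hphat t) j
  have hs : ∀ j k, Ahat t k j = -(Ahat t j k) := fun j k => by
    have := congrFun (congrFun (hskew t) j) k
    simpa [Matrix.transpose_apply] using this
  rw [hasDerivAt_pi]
  intro i
  have D := (hpe i).fun_sub (HasDerivAt.fun_sum (fun j (_ : j ∈ Finset.univ) =>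
    (HasDerivAt.fun_sum (fun k (_ : k ∈ Finset.univ) =>
      (hRe i k).fun_mul (hRhate j k))).fun_mul (hphate j)))
  convert D using 1
  · rfl
  simp only [Matrix.sub_apply, Matrix.mulVec, dotProduct, Matrix.mul_apply,
    Matrix.transpose_apply, Pi.sub_apply, Matrix.sub_apply, Finset.sum_mul,
    Finset.sum_add_distrib, Finset.sum_sub_distrib, add_mul, sub_mul]
  have key : ∀ x i1 : Fin 3, (∑ j, Rhat t x j * Ahat t j i1)
      = ∑ j, -(Ahat t i1 j * Rhat t x j) := fun x i1 =>
    Finset.sum_congr rfl (fun j _ => by rw [hs i1 j]; ring)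
  simp only [key, mul_sub, sub_mul, mul_neg, neg_mul, Finset.mul_sum, Finset.sum_sub_distrib,
    Finset.sum_neg_distrib]
  ring_nf
  congr 1
  refine Finset.sum_congr rfl fun x _ => ?_
  rw [Finset.sum_comm]
  refine Finset.sum_congr rfl fun a _ => ?_
  rw [Finset.sum_mul]
end
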